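/- arXiv:2504.12212 — 2 statements merged into one kernel-verified Lean document; each statement's English description precedes it below -/
import Mathlib

section
/- Q_I and its companion map R_I satisfy the entwining Yang–Baxter relation (item (5) of Proposition 2.5 for Q = Q_I): let K be a field and P₁, P₂, P₃ ∈ K. For all x, y, z ∈ K such that every denominator occurring in the evaluation of either composition below is nonzero (each application of Q_I^{α,β} requires its two arguments to be distinct, and each application of R_I^{α,β} requires its first argument u to satisfy u + β − α ≠ 0), one has (R_I)₁₂^{P₁,P₂} ∘ (Q_I)₁₃^{P₁,P₃} ∘ (Q_I)₂₃^{P₂,P₃}(x,y,z) = (Q_I)₂₃^{P₂,P₃} ∘ (Q_I)₁₃^{P₁,P₃} ∘ (R_I)₁₂^{P₁,P₂}(x,y,z). -/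
set_option maxHeartbeats 1000000


/-- The map `Q_I^{a,b} : (x,y) ↦ ((a-b)x/(x-y), (a-b)y/(x-y))`. -/
def QImap {K : Type*} [Field K] (a b : K) (w : K × K) : K × K :=
  ((a - b) * w.1 / (w.1 - w.2), (a - b) * w.2 / (w.1 - w.2))

/-- The companion map `R_I^{a,b} : (x,y) ↦ (x·y/(x+b-a), x+b-a)`. -/
def RI {K : Type*} [Field K] (a b : K) (w : K × K) : K × K :=
  (w.1 * w.2 / (w.1 + b - a), w.1 + b - a)

/-- The map acting as `F` on factors 1 and 2 of `X³` and as the identity on factor 3. -/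
def act12 {X : Type*} (F : X × X → X × X) (w : X × X × X) : X × X × X :=
  ((F (w.1, w.2.1)).1, (F (w.1, w.2.1)).2, w.2.2)

/-- The map acting as `F` on factors 1 and 3 of `X³` and as the identity on factor 2. -/
def act13 {X : Type*} (F : X × X → X × X) (w : X × X × X) : X × X × X :=
  ((F (w.1, w.2.2)).1, w.2.1, (F (w.1, w.2.2)).2)

/-- The map acting as `F` on factors 2 and 3 of `X³` and as the identity on factor 1. -/
def act23 {X : Type*} (F : X × X → X × X) (w : X × X × X) : X × X × X :=
  (w.1, (F (w.2.1, w.2.2)).1, (F (w.2.1, w.2.2)).2)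

/-- the entwining Yang–Baxter relation
`(R_I)₁₂ ∘ (Q_I)₁₃ ∘ (Q_I)₂₃ = (Q_I)₂₃ ∘ (Q_I)₁₃ ∘ (R_I)₁₂`
(wherever all denominators involved are nonzero). -/
theorem QI_RI_entwining {K : Type*} [Field K] (P₁ P₂ P₃ : K) (x y z : K)
    (h1 : y ≠ z)
    (h2 : (act23 (QImap P₂ P₃) (x, y, z)).1 ≠ (act23 (QImap P₂ P₃) (x, y, z)).2.2)
    (h3 : (act13 (QImap P₁ P₃) (act23 (QImap P₂ P₃) (x, y, z))).1 + P₂ - P₁ ≠ 0)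
    (h4 : x + P₂ - P₁ ≠ 0)
    (h5 : (act12 (RI P₁ P₂) (x, y, z)).1 ≠ (act12 (RI P₁ P₂) (x, y, z)).2.2)
    (h6 : (act13 (QImap P₁ P₃) (act12 (RI P₁ P₂) (x, y, z))).2.1
            ≠ (act13 (QImap P₁ P₃) (act12 (RI P₁ P₂) (x, y, z))).2.2) :
    act12 (RI P₁ P₂) (act13 (QImap P₁ P₃) (act23 (QImap P₂ P₃) (x, y, z)))
      = act23 (QImap P₂ P₃) (act13 (QImap P₁ P₃) (act12 (RI P₁ P₂) (x, y, z))) := by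
  simp only [act12, act13, act23, QImap, RI] at h2 h3 h5 h6 ⊢
  have h1' : y - z ≠ 0 := sub_ne_zero.mpr h1
  have h2' : x - (P₂ - P₃) * z / (y - z) ≠ 0 := sub_ne_zero.mpr h2
  have h5' : x * y / (x + P₂ - P₁) - z ≠ 0 := sub_ne_zero.mpr h5
  have h6' := sub_ne_zero.mpr h6
  have hN2 : x * (y - z) - (P₂ - P₃) * z ≠ 0 := by
    intro h; apply h2'; field_simp; linear_combination h
  have hD5 : x * y - z * (x + P₂ - P₁) ≠ 0 := by
    intro h; apply h5'; field_simp; linear_combination h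
  have key3 : (P₁ - P₃) * x / (x - (P₂ - P₃) * z / (y - z)) + P₂ - P₁
      = ((P₁ - P₃) * x * (y - z) + (P₂ - P₁) * (x * (y - z) - (P₂ - P₃) * z))
        / (x * (y - z) - (P₂ - P₃) * z) := by
    field_simp
    ring
  have hN3 : (P₁ - P₃) * x * (y - z) + (P₂ - P₁) * (x * (y - z) - (P₂ - P₃) * z) ≠ 0 := by
    rw [key3] at h3
    intro h; apply h3; rw [h, zero_div]
  have hfact : (P₁ - P₃) * x * (y - z) + (P₂ - P₁) * (x * (y - z) - (P₂ - P₃) * z)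
      = (P₂ - P₃) * (x * y - z * (x + P₂ - P₁)) := by ring
  have hP23 : P₂ - P₃ ≠ 0 := by
    intro h; apply hN3; rw [hfact, h, zero_mul]
  have key6 : x * y / (x + P₂ - P₁) - z = (x * y - z * (x + P₂ - P₁)) / (x + P₂ - P₁) := by
    field_simp
  have key2 : x - (P₂ - P₃) * z / (y - z) = (x * (y - z) - (P₂ - P₃) * z) / (y - z) := by
    field_simp
  have key7 : x + P₂ - P₁ - (P₁ - P₃) * z / (x * y / (x + P₂ - P₁) - z)
      = (x + P₂ - P₁) * (x * (y - z) - (P₂ - P₃) * z) / (x * y - z * (x + P₂ - P₁)) := by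
    rw [key6, div_div_eq_mul_div, eq_div_iff hD5, sub_mul,
      div_mul_eq_mul_div, mul_comm ((P₁ - P₃) * z), mul_div_assoc,
      div_self hD5, mul_one]
    ring
  have hA : x * (y - z) - z * (P₂ - P₃) ≠ 0 := by intro h; apply hN2; linear_combination h
  have hB : (y - z) * x - (P₂ - P₃) * z ≠ 0 := by intro h; apply hN2; linear_combination h
  have hC : x * y - z * (x + P₂ - P₁) - (P₁ - P₃) * z ≠ 0 := by intro h; apply hN2; linear_combination h
  have hD : y * x - z * (x + P₂ - P₁) ≠ 0 := by intro h; apply hD5; linear_combination h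
  have hE : (P₁ - P₃) * x * (y - z) + (P₂ - P₁) * (x * (y - z) - z * (P₂ - P₃)) ≠ 0 := by
    intro h; apply hN3; linear_combination h
  have hF : y * x - z * (x + P₂ - P₁) - (P₁ - P₃) * z ≠ 0 := by intro h; apply hN2; linear_combination h
  rw [Prod.ext_iff, Prod.ext_iff]
  refine ⟨?_, ?_, ?_⟩ <;> dsimp only <;> simp only [key3, key2, key7, key6]
  · field_simp
    rw [div_eq_iff (by intro h; apply hN3; linear_combination h)]
    ring
  · field_simp
    ring
  · field_simp
    ring
end

section
/- Q_I and the inverse R_I^{-1} of its companion map satisfy the entwining relation (item (7) of Proposition 2.5 for Q = Q_I): let K be a field and P₁, P₂, P₃ ∈ K. For all x, y, z ∈ K such that every denominator occurring in the evaluation of either composition below is nonzero (each application of Q_I^{α,β} requires its two arguments to be distinct, and each application of R_I^{-1;α,β} requires its second argument v to satisfy v + α − β ≠ 0), one has (Q_I)₁₂^{P₁,P₂} ∘ (Q_I)₁₃^{P₁,P₃} ∘ (R_I^{-1})₂₃^{P₂,P₃}(x,y,z) = (R_I^{-1})₂₃^{P₂,P₃} ∘ (Q_I)₁₃^{P₁,P₃}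 ∘ (Q_I)₁₂^{P₁,P₂}(x,y,z). -/
/-- The inverse companion map `R_I^{-1;a,b} : (x,v) ↦ (v+a-b, v·x/(v+a-b))`. -/
def RIinv {K : Type*} [Field K] (a b : K) (w : K × K) : K × K :=
  (w.2 + a - b, w.2 * w.1 / (w.2 + a - b))

set_option maxHeartbeats 1600000 in
/-- the entwining relation
`(Q_I)₁₂ ∘ (Q_I)₁₃ ∘ (R_I⁻¹)₂₃ = (R_I⁻¹)₂₃ ∘ (Q_I)₁₃ ∘ (Q_I)₁₂`
(wherever all denominators involved are nonzero). -/

theorem QI_RIinv_entwining {K : Type*} [Field K] (P₁ P₂ P₃ : K) (x y z : K)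
    (h1 : z + P₂ - P₃ ≠ 0)
    (h2 : (act23 (RIinv P₂ P₃) (x, y, z)).1 ≠ (act23 (RIinv P₂ P₃) (x, y, z)).2.2)
    (h3 : (act13 (QImap P₁ P₃) (act23 (RIinv P₂ P₃) (x, y, z))).1
            ≠ (act13 (QImap P₁ P₃) (act23 (RIinv P₂ P₃) (x, y, z))).2.1)
    (h4 : x ≠ y)
    (h5 : (act12 (QImap P₁ P₂) (x, y, z)).1 ≠ (act12 (QImap P₁ P₂) (x, y, z)).2.2)
    (h6 : (act13 (QImap P₁ P₃) (act12 (QImap P₁ P₂) (x, y, z))).2.2 + P₂ - P₃ ≠ 0) :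
    act12 (QImap P₁ P₂) (act13 (QImap P₁ P₃) (act23 (RIinv P₂ P₃) (x, y, z)))
      = act23 (RIinv P₂ P₃) (act13 (QImap P₁ P₃) (act12 (QImap P₁ P₂) (x, y, z))) := by
  simp only [act12, act13, act23, QImap, RIinv] at *
  replace h2 := sub_ne_zero.mpr h2
  replace h3 := sub_ne_zero.mpr h3
  replace h5 := sub_ne_zero.mpr h5
  have hxy := sub_ne_zero.mpr h4
  have hB : x * (z + P₂ - P₃) - z * y ≠ 0 := by
    have h := mul_ne_zero h2 h1; field_simp at h
    intro hc; exact h (by linear_combination hc)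
  have hC : (P₁ - P₃) * x - (x * (z + P₂ - P₃) - z * y) ≠ 0 := by
    have h := mul_ne_zero h3 h2
    field_simp at h
    intro hc; exact h (by linear_combination hc)
  have hD : (P₁ - P₂) * x - z * (x - y) ≠ 0 := by
    have h := mul_ne_zero h5 hxy
    field_simp at h
    intro hc; exact h (by linear_combination hc)
  have hE : (P₁ - P₃) * z * (x - y) + (P₂ - P₃) * ((P₁ - P₂) * x - z * (x - y)) ≠ 0 := by
    have key : (P₁ - P₃) * z / ((P₁ - P₂) * x / (x - y) - z) + P₂ - P₃
        = ((P₁ - P₃) * z * (x - y) + (P₂ - P₃) * ((P₁ - P₂) * x - z * (x - y)))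
          / ((P₁ - P₂) * x - z * (x - y)) := by
      have hD' : P₁ * x - z * x + (z * y - x * P₂) ≠ 0 := fun hc => hD (by linear_combination hc)
      have hD'' : (P₁ - P₂) * x - (x - y) * z ≠ 0 := fun hc => hD (by linear_combination hc)
      field_simp
      ring
    intro hc; apply h6; rw [key, hc, zero_div]
  have hC1 : P₁ * x + (-(P₂ * x) - x * z) + z * y ≠ 0 := fun hc => hC (by linear_combination hc)
  have hC2 : P₁ * x + (-(P₂ * x) - z * x) + z * y ≠ 0 := fun hc => hC (by linear_combination hc)
  have hAC := mul_ne_zero h1 hC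
  have hE1 : P₁ * P₂ * x + P₁ * z * x + (-(P₁ * P₃ * x) - P₂ * z * x * 2) + P₂ * z * y
      + (P₂ * P₃ * x - P₂ ^ 2 * x) + z * P₃ * x + (-(z * P₃ * y) - z ^ 2 * x) + z ^ 2 * y ≠ 0 :=
    fun hc => hAC (by linear_combination hc)
  have hE2 : P₁ * P₂ * x - P₁ * P₃ * x + P₁ * x * z + (P₂ * P₃ * x - P₂ * x * z * 2)
      + (P₂ * z * y - P₂ ^ 2 * x) + P₃ * x * z + (-(P₃ * z * y) - x * z ^ 2) + z ^ 2 * y ≠ 0 :=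
    fun hc => hAC (by linear_combination hc)
  have hL1 : (P₁ - P₃) * x * (z + P₂ - P₃) - (x * (z + P₂ - P₃) - z * y) * (z + P₂ - P₃) ≠ 0 :=
    fun hc => hAC (by linear_combination hc)
  have hR1 : (P₁ - P₂) * x - (x - y) * z ≠ 0 := fun hc => hD (by linear_combination hc)
  have hD3 : x * (P₁ - P₂) - z * (x - y) ≠ 0 := fun hc => hD (by linear_combination hc)
  have hB3 : (z + P₂ - P₃) * x - z * y ≠ 0 := fun hc => hB (by linear_combination hc)
  have hC3 : (P₁ - P₃) * x - ((z + P₂ - P₃) * x - z * y) ≠ 0 := fun hc => hC (by linear_combination hc)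
  have keyS : (P₁ - P₃) * z * (x - y) / ((P₁ - P₂) * x - (x - y) * z) + P₂ - P₃
      = ((P₁ - P₃) * z * (x - y) + (P₂ - P₃) * ((P₁ - P₂) * x - z * (x - y)))
        / ((P₁ - P₂) * x - z * (x - y)) := by
    rw [show (P₁ - P₂) * x - (x - y) * z = (P₁ - P₂) * x - z * (x - y) by ring]
    field_simp
    ring
  have hS : (P₁ - P₃) * z * (x - y) / ((P₁ - P₂) * x - (x - y) * z) + P₂ - P₃ ≠ 0 := by
    rw [keyS]; exact div_ne_zero hE hD
  refine Prod.ext ?_ (Prod.ext ?_ ?_)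
  · field_simp
    ring
  · field_simp
    ring
  · have hE' : (P₁ - P₃) * z * (x - y) + P₂ * ((P₁ - P₂) * x - (x - y) * z)
        - ((P₁ - P₂) * x - (x - y) * z) * P₃ ≠ 0 := fun hc => hE (by linear_combination hc)
    have hE3 : (P₁ - P₃) * z * (x - y) + P₂ * (x * (P₁ - P₂) - z * (x - y))
        - P₃ * (x * (P₁ - P₂) - z * (x - y)) ≠ 0 := fun hc => hE (by linear_combination hc)
    field_simp [keyS]
    ring
end
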